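/- The function f(λ,μ₁,μ₂) = λ·h(μ₁/λ) + (1 - λ - μ₁/τ)·h((γ - μ₁ - μ₂)/(1 - λ - μ₁/τ)) + (μ₁/τ)·h(μ₂τ/μ₁) is concave on its domain (where all arguments of h lie in (0,1) and all outer coefficients are positive), for any fixed constants γ, τ ∈ (0,1). -/

import Mathlib

/-!
Each of the three summands has the form `x · h(y / x)` with `x` and `y` affine in
`(λ, μ₁, μ₂)`: the pairs are `(λ, μ₁)`, `(1 - λ - μ₁/τ, γ - μ₁ - μ₂)` and `(μ₁/τ, μ₂)`.
The perspective `(x, y) ↦ x · h(y / x)` of the concave function `h` is concave, concavity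
survives precomposition with affine maps and sums, and the domain of `f` is exactly the
set where all three pairs satisfy `0 < y < x`.
-/

/-- Binary entropy function (base 2). -/
noncomputable def binEnt (p : ℝ) : ℝ :=
  -(p * Real.logb 2 p) - (1 - p) * Real.logb 2 (1 - p)

open Set

theorem ConcaveOn.perspective {s : Set ℝ} {f : ℝ → ℝ} (hf : ConcaveOn ℝ s f) :
    ConcaveOn ℝ {p : ℝ × ℝ | 0 < p.1 ∧ p.2 / p.1 ∈ s} (fun p => p.1 * f (p.2 / p.1)) := by
  -- The ratio at `a • p + b • q` is the convex combination of the ratios at `p` and `q`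
  -- with weights proportional to `a * p.1` and `b * q.1`.
  have combo : ∀ ⦃p q : ℝ × ℝ⦄, 0 < p.1 → 0 < q.1 → ∀ ⦃a b : ℝ⦄, 0 ≤ a → 0 ≤ b → a + b = 1 →
      let X := a * p.1 + b * q.1
      0 < X ∧ 0 ≤ a * p.1 / X ∧ 0 ≤ b * q.1 / X ∧ a * p.1 / X + b * q.1 / X = 1 ∧
        (a • p + b • q).2 / (a • p + b • q).1 =
          (a * p.1 / X) • (p.2 / p.1) + (b * q.1 / X) • (q.2 / q.1) := by
    intro p q hp hq a b ha hb hab X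
    have hX : 0 < X := by
      rcases ha.eq_or_lt with rfl | ha
      · simp_all [X]
      · positivity
    refine ⟨hX, by positivity, by positivity, by rw [← add_div, div_self hX.ne'], ?_⟩
    simp only [Prod.fst_add, Prod.snd_add, Prod.smul_fst, Prod.smul_snd, smul_eq_mul, X]
    field_simp
  refine ⟨fun p ⟨hp, hps⟩ q ⟨hq, hqs⟩ a b ha hb hab => ?_,
    fun p ⟨hp, hps⟩ q ⟨hq, hqs⟩ a b ha hb hab => ?_⟩
  · obtain ⟨hX, hw₁, hw₂, hw, hratio⟩ := combo hp hq ha hb hab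
    exact ⟨by simpa using hX, hratio ▸ hf.1 hps hqs hw₁ hw₂ hw⟩
  · obtain ⟨hX, hw₁, hw₂, hw, hratio⟩ := combo hp hq ha hb hab
    have hconc := hf.2 hps hqs hw₁ hw₂ hw
    simp only [smul_eq_mul] at hconc ⊢
    rw [hratio]
    calc a * (p.1 * f (p.2 / p.1)) + b * (q.1 * f (q.2 / q.1))
        = (a * p.1 + b * q.1) *
            (a * p.1 / (a * p.1 + b * q.1) * f (p.2 / p.1) +
              b * q.1 / (a * p.1 + b * q.1) * f (q.2 / q.1)) := by field_simp
      _ ≤ (a • p + b • q).1 * f _ := by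
        simp only [Prod.fst_add, Prod.smul_fst, smul_eq_mul]
        exact mul_le_mul_of_nonneg_left hconc hX.le

theorem ConcaveOn.perspective_comp_affineMap {E : Type*} [AddCommGroup E] [Module ℝ E]
    {s : Set ℝ} {f : ℝ → ℝ} (hf : ConcaveOn ℝ s f) (x y : E →ᵃ[ℝ] ℝ) :
    ConcaveOn ℝ {p | 0 < x p ∧ y p / x p ∈ s} (fun p => x p * f (y p / x p)) :=
  hf.perspective.comp_affineMap (x.prod y)

theorem ConcaveOn.add_inter {𝕜 E β : Type*} [Semiring 𝕜] [PartialOrder 𝕜] [AddCommMonoid E]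
    [AddCommMonoid β] [PartialOrder β] [IsOrderedAddMonoid β] [SMul 𝕜 E] [DistribMulAction 𝕜 β]
    {s t : Set E} {f g : E → β} (hf : ConcaveOn 𝕜 s f) (hg : ConcaveOn 𝕜 t g) :
    ConcaveOn 𝕜 (s ∩ t) (f + g) :=
  (hf.subset inter_subset_left (hf.1.inter hg.1)).add
    (hg.subset inter_subset_right (hf.1.inter hg.1))

theorem pos_and_div_mem_Ioo_zero_one_iff {x y : ℝ} :
    0 < x ∧ y / x ∈ Ioo 0 1 ↔ 0 < y ∧ y < x := by
  constructor
  · rintro ⟨hx, hpos, hlt⟩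
    exact ⟨(div_pos_iff_of_pos_right hx).1 hpos, (div_lt_one hx).1 hlt⟩
  · rintro ⟨hy, hyx⟩
    have hx := hy.trans hyx
    exact ⟨hx, div_pos hy hx, (div_lt_one hx).2 hyx⟩

theorem binEnt_eq : binEnt = (Real.log 2)⁻¹ • Real.binEntropy := by
  ext p
  simp only [binEnt, Real.binEntropy, Real.logb, Real.log_inv, Pi.smul_apply, smul_eq_mul]
  ring

theorem concaveOn_binEnt : ConcaveOn ℝ (Icc 0 1) binEnt :=
  binEnt_eq ▸ Real.strictConcave_binEntropy.concaveOn.smul (by positivity)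

theorem f_concave_general (γ τ : ℝ) (hτ0 : 0 < τ) :
    ConcaveOn ℝ
      {p : ℝ × ℝ × ℝ |
        0 < p.1 ∧ 0 < p.2.1 ∧ 0 < p.2.2 ∧
        p.2.1 / p.1 < 1 ∧ p.2.2 * τ / p.2.1 < 1 ∧
        0 < 1 - p.1 - p.2.1 / τ ∧
        0 < γ - p.2.1 - p.2.2 ∧ γ - p.2.1 - p.2.2 < 1 - p.1 - p.2.1 / τ}
      (fun p : ℝ × ℝ × ℝ =>
        p.1 * binEnt (p.2.1 / p.1)
        + (1 - p.1 - p.2.1 / τ) * binEnt ((γ - p.2.1 - p.2.2) / (1 - p.1 - p.2.1 / τ))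
        + (p.2.1 / τ) * binEnt (p.2.2 * τ / p.2.1)) := by
  let lam : ℝ × ℝ × ℝ →ᵃ[ℝ] ℝ := (LinearMap.fst ℝ ℝ (ℝ × ℝ)).toAffineMap
  let mu₁ : ℝ × ℝ × ℝ →ᵃ[ℝ] ℝ :=
    ((LinearMap.fst ℝ ℝ ℝ).comp (LinearMap.snd ℝ ℝ (ℝ × ℝ))).toAffineMap
  let mu₂ : ℝ × ℝ × ℝ →ᵃ[ℝ] ℝ :=
    ((LinearMap.snd ℝ ℝ ℝ).comp (LinearMap.snd ℝ ℝ (ℝ × ℝ))).toAffineMap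
  have h := concaveOn_binEnt.subset Ioo_subset_Icc_self (convex_Ioo 0 1)
  have hf := ((h.perspective_comp_affineMap lam mu₁).add_inter
    (h.perspective_comp_affineMap (AffineMap.const ℝ _ 1 - lam - τ⁻¹ • mu₁)
      (AffineMap.const ℝ _ γ - mu₁ - mu₂))).add_inter
    (h.perspective_comp_affineMap (τ⁻¹ • mu₁) mu₂)
  refine Eq.mp ?_ hf
  congr 1
  · ext p
    simp only [mem_inter_iff, mem_ofPred_eq, pos_and_div_mem_Ioo_zero_one_iff,
      LinearMap.coe_toAffineMap, LinearMap.coe_comp, LinearMap.coe_fst, LinearMap.coe_snd,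
      Function.comp_apply, AffineMap.coe_sub, AffineMap.coe_const, AffineMap.coe_smul,
      Pi.sub_apply, Pi.smul_apply, Function.const_apply, smul_eq_mul, inv_mul_eq_div,
      lam, mu₁, mu₂]
    constructor
    · rintro ⟨⟨⟨hm₁, hm₁l⟩, hgap, hlt⟩, hm₂, hm₂m₁⟩
      have hl := hm₁.trans hm₁l
      exact ⟨hl, hm₁, hm₂, (div_lt_one hl).2 hm₁l, (div_lt_one hm₁).2 ((lt_div_iff₀ hτ0).1 hm₂m₁),
        by linarith, hgap, hlt⟩
    · rintro ⟨hl, hm₁, hm₂, hm₁l, hm₂m₁, -, hgap, hlt⟩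
      exact ⟨⟨⟨hm₁, (div_lt_one hl).1 hm₁l⟩, hgap, hlt⟩, hm₂,
        (lt_div_iff₀ hτ0).2 ((div_lt_one hm₁).1 hm₂m₁)⟩
  · ext p
    simp [lam, mu₁, mu₂, inv_mul_eq_div, div_div_eq_mul_div]

/-- the function
    f(λ,μ₁,μ₂) = λ·h(μ₁/λ) + (1-λ-μ₁/τ)·h((γ-μ₁-μ₂)/(1-λ-μ₁/τ)) + (μ₁/τ)·h(μ₂τ/μ₁)
    is concave on its domain (all arguments of h in (0,1), all outer coefficients
    positive), for any fixed γ, τ ∈ (0,1). -/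
theorem f_concave (γ τ : ℝ) (hγ0 : 0 < γ) (hγ1 : γ < 1) (hτ0 : 0 < τ) (hτ1 : τ < 1) :
    ConcaveOn ℝ
      {p : ℝ × ℝ × ℝ |
        0 < p.1 ∧ 0 < p.2.1 ∧ 0 < p.2.2 ∧
        p.2.1 / p.1 < 1 ∧ p.2.2 * τ / p.2.1 < 1 ∧
        0 < 1 - p.1 - p.2.1 / τ ∧
        0 < γ - p.2.1 - p.2.2 ∧ γ - p.2.1 - p.2.2 < 1 - p.1 - p.2.1 / τ}
      (fun p : ℝ × ℝ × ℝ =>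
        p.1 * binEnt (p.2.1 / p.1)
        + (1 - p.1 - p.2.1 / τ) * binEnt ((γ - p.2.1 - p.2.2) / (1 - p.1 - p.2.1 / τ))
        + (p.2.1 / τ) * binEnt (p.2.2 * τ / p.2.1)) :=
  f_concave_general γ τ hτ0
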